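/- arXiv:2012.08154 — 2 statements merged into one kernel-verified Lean document; each statement's English description precedes it below -/
import Mathlib

section
/- For $d \geq 2$, the set $\mathcal{W}_0$ of real $d \times d$ matrices $W$ with $h(W) = \mathrm{tr}(\exp(W \odot W)) - d = 0$ is not convex: there exist $w, w' \in \mathcal{W}_0$ with $(w + w')/2 \notin \mathcal{W}_0$. -/
/-!
The edge `0 → 1` alone, and the reverse edge alone, are acyclic graphs, so their weighted
adjacency matrices are nilpotent and `h` vanishes on them. Their midpoint carries both edges,
i.e. a 2-cycle. For a matrix `B` with nonnegative entries every term `tr (B ^ k) / k!` of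
`tr (exp B)` is nonnegative, and the `k = 2` term is at least `B i j * B j i / 2`, which is
positive along the 2-cycle; hence `h > 0` at the midpoint.
-/

open Matrix NormedSpace

theorem NormedSpace.exp_eq_one_add_of_mul_self_eq_zero {𝔸 : Type*} [Ring 𝔸] [TopologicalSpace 𝔸]
    [IsTopologicalRing 𝔸] [Algebra ℚ 𝔸] {a : 𝔸} (ha : a * a = 0) : exp a = 1 + a := by
  rw [exp_eq_tsum_rat]
  dsimp only
  rw [tsum_eq_sum (s := Finset.range 2)]
  · simp [Finset.sum_range_succ]
  · intro k hk
    obtain ⟨k, rfl⟩ : ∃ m, k = m + 2 := ⟨k - 2, by simp at hk; omega⟩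
    rw [pow_add, sq, ha, mul_zero, smul_zero]

namespace Matrix

variable {n : Type*} [Fintype n] [DecidableEq n]

theorem hasSum_trace_exp (A : Matrix n n ℝ) :
    HasSum (fun k : ℕ => (k.factorial : ℝ)⁻¹ * (A ^ k).trace) (exp A).trace := by
  let : NormedRing (Matrix n n ℝ) := Matrix.linftyOpNormedRing
  let : NormedAlgebra ℝ (Matrix n n ℝ) := Matrix.linftyOpNormedAlgebra
  have h := (exp_series_hasSum_exp' (𝕂 := ℝ) A).map
    (traceLinearMap n ℝ ℝ) (traceLinearMap n ℝ ℝ).continuous_of_finiteDimensional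
  simp only [Function.comp_def, traceLinearMap_apply, trace_smul, smul_eq_mul] at h
  exact h

theorem trace_exp_of_mul_self_eq_zero {A : Matrix n n ℝ} (hA : A * A = 0) :
    (exp A).trace = Fintype.card n + A.trace := by
  rw [exp_eq_one_add_of_mul_self_eq_zero hA, trace_add, trace_one]

theorem trace_exp_single_of_ne {i j : n} (hij : i ≠ j) (c : ℝ) :
    (exp (single i j c)).trace = Fintype.card n := by
  rw [trace_exp_of_mul_self_eq_zero (single_mul_single_of_ne c i j i hij.symm c),
    trace_single_eq_of_ne i j c hij, add_zero]

theorem trace_pow_nonneg {R : Type*} [Semiring R] [PartialOrder R] [IsOrderedRing R]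
    {A : Matrix n n R} (hA : ∀ i j, 0 ≤ A i j) (k : ℕ) : 0 ≤ (A ^ k).trace :=
  Finset.sum_nonneg fun i _ => pow_apply_nonneg hA k i i

theorem mul_apply_le_trace_sq {R : Type*} [Semiring R] [PartialOrder R] [IsOrderedRing R]
    {A : Matrix n n R} (hA : ∀ i j, 0 ≤ A i j) (i j : n) : A i j * A j i ≤ (A ^ 2).trace := by
  simp only [sq, trace, diag_apply, mul_apply]
  calc A i j * A j i ≤ ∑ l, A i l * A l i :=
        Finset.single_le_sum (f := fun l => A i l * A l i) (fun l _ => mul_nonneg (hA i l) (hA l i))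
          (Finset.mem_univ j)
    _ ≤ ∑ m, ∑ l, A m l * A l m :=
        Finset.single_le_sum (f := fun m => ∑ l, A m l * A l m)
          (fun m _ => Finset.sum_nonneg fun l _ => mul_nonneg (hA m l) (hA l m)) (Finset.mem_univ i)

theorem card_add_le_trace_exp_of_nonneg {A : Matrix n n ℝ} (hA : ∀ i j, 0 ≤ A i j) (i j : n) :
    Fintype.card n + A i j * A j i / 2 ≤ (exp A).trace := by
  have hterms := sum_le_hasSum {0, 2}
    (fun k _ => mul_nonneg (by positivity) (trace_pow_nonneg hA k)) (hasSum_trace_exp A)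
  have h2 := mul_apply_le_trace_sq hA i j
  simp only [Finset.sum_pair (by norm_num : (0 : ℕ) ≠ 2), pow_zero, trace_one] at hterms
  norm_num [Nat.factorial] at hterms
  linarith

end Matrix

theorem stmt_6 (d : ℕ) (hd : 2 ≤ d) :
    ∃ w w' : Matrix (Fin d) (Fin d) ℝ,
      (NormedSpace.exp (w ⊙ w)).trace - (d : ℝ) = 0 ∧
      (NormedSpace.exp (w' ⊙ w')).trace - (d : ℝ) = 0 ∧
      (NormedSpace.exp (((2 : ℝ)⁻¹ • (w + w')) ⊙ ((2 : ℝ)⁻¹ • (w + w')))).trace - (d : ℝ) ≠ 0 := by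
  let i : Fin d := ⟨0, by omega⟩
  let j : Fin d := ⟨1, by omega⟩
  have hij : i ≠ j := by simp [i, j, Fin.ext_iff]
  refine ⟨single i j (1 : ℝ), single j i 1, ?_, ?_, ?_⟩
  · rw [single_hadamard_single_eq, trace_exp_single_of_ne hij, Fintype.card_fin, sub_self]
  · rw [single_hadamard_single_eq, trace_exp_single_of_ne hij.symm, Fintype.card_fin, sub_self]
  · set m : Matrix (Fin d) (Fin d) ℝ := (2 : ℝ)⁻¹ • (single i j 1 + single j i 1)
    have hm : m i j = 2⁻¹ ∧ m j i = 2⁻¹ := by simp [m, hij, hij.symm]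
    have h := card_add_le_trace_exp_of_nonneg (A := m ⊙ m) (fun a b => mul_self_nonneg (m a b)) i j
    rw [hadamard_apply, hadamard_apply, hm.1, hm.2, Fintype.card_fin] at h
    linarith
end

section
/- If $W$ is a real $d\times d$ matrix whose directed graph (edges $i\to j$ where $W_{ij}\neq 0$) contains a cycle of length $K \geq 1$ passing through an edge $(i,j)$, then $(\exp(W \odot W))_{ji} > 0$ and consequently $(\nabla h(W))_{ij} = 2 W_{ij} (\exp(W\odot W))_{ji} \neq 0$. -/
open Matrix

/-
Since `W ⊙ W` is entrywise nonnegative, so are all its powers and every term of the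
exponential series `exp (W ⊙ W) = ∑ (W ⊙ W)ⁿ / n!`. The closing walk `j → ⋯ → i` of the
cycle has all its edges weighted by `W a b ^ 2 > 0`, so `((W ⊙ W) ^ (K - 1)) j i > 0`;
hence the `(j, i)` entry of the exponential is positive, and `2 W i j exp(W ⊙ W) j i ≠ 0`
because `W i j ≠ 0`.
-/

namespace Matrix

variable {ι : Type*} [Fintype ι] [DecidableEq ι]

theorem pow_apply_pos_of_walk {R : Type*} [Semiring R] [PartialOrder R] [IsStrictOrderedRing R]
    {A : Matrix ι ι R} (hA : ∀ a b, 0 ≤ A a b) (f : ℕ → ι) {n : ℕ}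
    (hf : ∀ k < n, 0 < A (f k) (f (k + 1))) : 0 < (A ^ n) (f 0) (f n) := by
  induction n with
  | zero => simp
  | succ n ih =>
    rw [pow_succ, mul_apply]
    refine Finset.sum_pos' (fun c _ => mul_nonneg (pow_apply_nonneg hA n _ c) (hA c _))
      ⟨f n, Finset.mem_univ _, ?_⟩
    exact mul_pos (ih fun k hk => hf k (hk.trans n.lt_succ_self)) (hf n n.lt_succ_self)

section

attribute [local instance] Matrix.linftyOpNormedRing Matrix.linftyOpNormedAlgebra

theorem hasSum_exp_apply {𝕂 : Type*} [RCLike 𝕂] (A : Matrix ι ι 𝕂) (a b : ι) :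
    HasSum (fun n => (n.factorial⁻¹ : 𝕂) * (A ^ n) a b) (NormedSpace.exp A a b) :=
  Pi.hasSum.mp (Pi.hasSum.mp (NormedSpace.exp_series_hasSum_exp' (𝕂 := 𝕂) A) a) b

end

theorem exp_apply_pos_of_pow_apply_pos {A : Matrix ι ι ℝ} (hA : ∀ a b, 0 ≤ A a b)
    {a b : ι} {n : ℕ} (h : 0 < (A ^ n) a b) : 0 < NormedSpace.exp A a b := by
  have hsum := hasSum_exp_apply A a b
  rw [← hsum.tsum_eq]
  exact hsum.summable.tsum_pos (fun m => by have := pow_apply_nonneg hA m a b; positivity) n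
    (by positivity)

end Matrix

theorem stmt_10_general (d : ℕ) (W : Matrix (Fin d) (Fin d) ℝ) (i j : Fin d) (K : ℕ)
    (f : ℕ → Fin d) (hij : W i j ≠ 0) (hf0 : f 0 = j) (hfK : f (K - 1) = i)
    (hwalk : ∀ k < K - 1, W (f k) (f (k + 1)) ≠ 0) :
    0 < NormedSpace.exp (W ⊙ W) j i ∧
      2 * W i j * NormedSpace.exp (W ⊙ W) j i ≠ 0 := by
  have hA : ∀ a b, 0 ≤ (W ⊙ W) a b := fun a b => mul_self_nonneg (W a b)
  have hpow : 0 < ((W ⊙ W) ^ (K - 1)) j i := by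
    simpa only [hf0, hfK] using
      pow_apply_pos_of_walk hA f fun k hk => mul_self_pos.mpr (hwalk k hk)
  have hexp := exp_apply_pos_of_pow_apply_pos hA hpow
  exact ⟨hexp, mul_ne_zero (mul_ne_zero two_ne_zero hij) hexp.ne'⟩

theorem stmt_10 (d : ℕ) (W : Matrix (Fin d) (Fin d) ℝ) (i j : Fin d) (K : ℕ) (hK : 1 ≤ K)
    (f : ℕ → Fin d) (hij : W i j ≠ 0) (hf0 : f 0 = j) (hfK : f (K - 1) = i)
    (hwalk : ∀ k < K - 1, W (f k) (f (k + 1)) ≠ 0) :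
    0 < NormedSpace.exp (W ⊙ W) j i ∧
      2 * W i j * NormedSpace.exp (W ⊙ W) j i ≠ 0 :=
  stmt_10_general d W i j K f hij hf0 hfK hwalk
end
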